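/- Let N ≥ 1 be a natural number, b ∈ [0,1], M a real number, and Δ = M/(2^N−1). Define p on the set Option (Fin N) by p(some i) = b(1−b)^{N−1} for each i and p(none) = 1 − N·b(1−b)^{N−1}. Then p is a probability distribution (all values are nonnegative and they sum to 1), and for any choice of signs ε : Fin N → {−1, 1}, the distortion random variable δ with δ(some i) = ε(i)·Δ·2^i and δ(none) = 0 satisfies Σ_ω p(ω)·δ(ω)² = (4^N−1)/(3·(2^N−1)²) · b(1−b)^{N−1} · M². (This is Lemma 1: the mean square model error per parameter caused by bit errors.) -/
import Mathlib

lemma aux_nb (n : ℕ) (b : ℝ) (hb0 : 0 ≤ b) (hb1 : b ≤ 1) :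
    (n : ℝ) * (b * (1 - b) ^ (n - 1)) ≤ 1 - (1 - b) ^ n := by
  induction n with
  | zero => simp
  | succ n ih =>
    rcases Nat.eq_zero_or_pos n with h | h
    · subst h; simp
    · have h1 : n - 1 + 1 = n := Nat.succ_pred_eq_of_pos h
      have hnn : (0:ℝ) ≤ (1 - b) ^ (n-1) := pow_nonneg (by linarith) _
      have key : (1 - b) ^ n = (1 - b) ^ (n - 1) * (1 - b) := by
        rw [← pow_succ, h1]
      have goal1 : ((n:ℝ) + 1) * (b * (1 - b) ^ n) ≤ 1 - (1 - b) ^ (n + 1) := by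
        rw [pow_succ]
        rw [key] at ih ⊢
        have hq : (0:ℝ) ≤ 1 - b := by linarith
        have hc1 : (1 - b) ^ (n - 1) * (1 - b) ≤ 1 :=
          mul_le_one₀ (pow_le_one₀ hq (by linarith)) hq (by linarith)
        nlinarith [mul_le_mul_of_nonneg_right ih hq,
          mul_nonneg hb0 (sub_nonneg.2 hc1)]
      simpa [Nat.add_sub_cancel] using goal1

/-- Lemma 1: the at-most-one-bit-error distribution on `Option (Fin N)` is a probability
distribution, and the mean square model error per parameter equals
`(4^N-1)/(3(2^N-1)²) · b(1-b)^(N-1) · M²`. -/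
theorem stmt2 (N : ℕ) (hN : 1 ≤ N) (b : ℝ) (hb0 : 0 ≤ b) (hb1 : b ≤ 1)
    (M : ℝ) (ε : Fin N → ℝ) (hε : ∀ i, ε i = 1 ∨ ε i = -1) :
    let Δ : ℝ := M / (2 ^ N - 1)
    let p : Option (Fin N) → ℝ := fun ω => match ω with
      | some _ => b * (1 - b) ^ (N - 1)
      | none => 1 - (N : ℝ) * (b * (1 - b) ^ (N - 1))
    let δ : Option (Fin N) → ℝ := fun ω => match ω with
      | some i => ε i * Δ * 2 ^ (i : ℕ)
      | none => 0
    (∀ ω, 0 ≤ p ω) ∧ (∑ ω, p ω = 1) ∧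
      (∑ ω, p ω * δ ω ^ 2
        = (4 ^ N - 1) / (3 * (2 ^ N - 1) ^ 2) * (b * (1 - b) ^ (N - 1)) * M ^ 2) := by
  intro Δ p δ
  have hc : (0:ℝ) ≤ b * (1 - b) ^ (N - 1) :=
    mul_nonneg hb0 (pow_nonneg (by linarith) _)
  have hnb := aux_nb N b hb0 hb1
  have hpow : (0:ℝ) ≤ (1 - b) ^ N := pow_nonneg (by linarith) _
  have h2N : (2:ℝ) ^ N - 1 ≠ 0 := by
    have : (2:ℝ) ^ 1 ≤ 2 ^ N := pow_le_pow_right₀ (by norm_num) hN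
    simp at this; nlinarith
  refine ⟨?_, ?_, ?_⟩
  · rintro (_ | i)
    · simpa [p] using by nlinarith
    · exact hc
  · rw [Fintype.sum_option]
    simp [p, Finset.sum_const, Finset.card_univ]
  · rw [Fintype.sum_option]
    have hsum : ∑ i : Fin N, p (some i) * δ (some i) ^ 2
        = b * (1 - b) ^ (N - 1) * Δ ^ 2 * ∑ i : Fin N, (4:ℝ) ^ (i:ℕ) := by
      rw [Finset.mul_sum]
      apply Finset.sum_congr rfl
      intro i _
      have h4 : (4:ℝ) ^ (i:ℕ) = (2 ^ (i:ℕ))^2 := by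
        rw [← pow_mul, pow_mul']; norm_num
      rcases hε i with h | h <;> simp only [p, δ, h, h4] <;> ring
    have hgeom : ∑ i : Fin N, (4:ℝ) ^ (i:ℕ) = (4 ^ N - 1) / 3 := by
      rw [Fin.sum_univ_eq_sum_range, geom_sum_eq (by norm_num)]
      norm_num
    have h0 : p none * δ none ^ 2 = 0 := by simp [δ]
    rw [h0, hsum, hgeom]
    simp only [Δ]
    field_simp
    ring
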